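/- arXiv:2407.13499 — 3 statements merged into one kernel-verified Lean document; each statement's English description precedes it below -/
import Mathlib

section
/- Let P₀, P₁ > 0, let r be uniformly distributed on [0,1], and let B ∈ {0,1} be a random bit independent of r (with arbitrary distribution). Define the output group O by: O = B if r < ((1−B)·P₀ + B·P₁)/(P₀ + P₁), and O = 1−B otherwise. Then ℙ{O = 0} = P₀/(P₀ + P₁); i.e., the distribution of the output group is P₀/(P₀+P₁) for group 0 and P₁/(P₀+P₁) for group 1, independent of the distribution of the secret bit B. -/
/-!
Conditionally on `B = 0` the output is `0` iff `r < t`, and conditionally on `B = 1` it is `0`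
iff `r ≥ 1 - t`, where `t = P₀ / (P₀ + P₁)`. Both events have probability `t` for a uniform `r`,
so by independence `ℙ{O = 0} = t ℙ{B = 0} + t ℙ{B = 1} = t`.
-/

open MeasureTheory ProbabilityTheory Set

section UniformUnitInterval

variable {Ω : Type*} [MeasurableSpace Ω] {μ : Measure Ω} {r : Ω → ℝ}

lemma measure_preimage_eq_volume_inter_Icc (hr : Measurable r)
    (hr_unif : μ.map r = volume.restrict (Icc (0 : ℝ) 1)) {S : Set ℝ} (hS : MeasurableSet S) :
    μ (r ⁻¹' S) = volume (S ∩ Icc 0 1) := by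
  rw [← Measure.map_apply hr hS, hr_unif, Measure.restrict_apply hS]

lemma measure_preimage_Iio_of_uniform (hr : Measurable r)
    (hr_unif : μ.map r = volume.restrict (Icc (0 : ℝ) 1)) {t : ℝ} (ht : t ≤ 1) :
    μ (r ⁻¹' Iio t) = ENNReal.ofReal t := by
  have hIco : Iio t ∩ Icc 0 1 = Ico 0 t := by
    ext x; simp only [mem_inter_iff, mem_Iio, mem_Icc, mem_Ico]; constructor <;> intro <;> grind
  rw [measure_preimage_eq_volume_inter_Icc hr hr_unif measurableSet_Iio, hIco, Real.volume_Ico,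
    sub_zero]

lemma measure_preimage_Ici_of_uniform (hr : Measurable r)
    (hr_unif : μ.map r = volume.restrict (Icc (0 : ℝ) 1)) {s : ℝ} (hs : 0 ≤ s) :
    μ (r ⁻¹' Ici s) = ENNReal.ofReal (1 - s) := by
  have hIcc : Ici s ∩ Icc 0 1 = Icc s 1 := by
    ext x; simp only [mem_inter_iff, mem_Ici, mem_Icc]; constructor <;> intro <;> grind
  rw [measure_preimage_eq_volume_inter_Icc hr hr_unif measurableSet_Ici, hIcc, Real.volume_Icc]

end UniformUnitInterval

namespace ProbabilityTheory

lemma IndepFun.measure_union_preimage_inter_compl {Ω α β : Type*} [MeasurableSpace Ω]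
    [MeasurableSpace α] [MeasurableSpace β] {μ : Measure Ω} [IsProbabilityMeasure μ]
    {X : Ω → α} {B : Ω → β} (hB : Measurable B) (hXB : IndepFun X B μ)
    {S T : Set α} {U : Set β} (hS : MeasurableSet S) (hT : MeasurableSet T) (hU : MeasurableSet U)
    (hST : μ (X ⁻¹' S) = μ (X ⁻¹' T)) :
    μ (X ⁻¹' S ∩ B ⁻¹' U ∪ X ⁻¹' T ∩ B ⁻¹' Uᶜ) = μ (X ⁻¹' S) := by
  have hE : MeasurableSet (B ⁻¹' U) := hB hU
  have hin : (X ⁻¹' S ∩ B ⁻¹' U ∪ X ⁻¹' T ∩ B ⁻¹' Uᶜ) ∩ B ⁻¹' U = X ⁻¹' S ∩ B ⁻¹' U := by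
    ext; simp only [mem_inter_iff, mem_union, mem_preimage, mem_compl_iff]; tauto
  have hout : (X ⁻¹' S ∩ B ⁻¹' U ∪ X ⁻¹' T ∩ B ⁻¹' Uᶜ) \ B ⁻¹' U = X ⁻¹' T ∩ B ⁻¹' Uᶜ := by
    ext; simp only [mem_inter_iff, mem_union, mem_preimage, mem_compl_iff, mem_sdiff]; tauto
  rw [← measure_inter_add_sdiff _ hE, hin, hout, hXB.measure_inter_preimage_eq_mul _ _ hS hU,
    hXB.measure_inter_preimage_eq_mul _ _ hT hU.compl, ← hST, ← mul_add, preimage_compl,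
    prob_add_prob_compl hE, mul_one]

end ProbabilityTheory

/-- Security proof step `G₀ = G₁`: if the uniform random number `r` is independent of the
secret bit `B`, then the output group `O` is distributed as `(P₀/(P₀+P₁), P₁/(P₀+P₁))`,
independently of the distribution of `B`. -/
theorem stmt_3 {Ω : Type*} [MeasurableSpace Ω] (μ : Measure Ω) [IsProbabilityMeasure μ]
    (P₀ P₁ : ℝ) (hP₀ : 0 < P₀) (hP₁ : 0 < P₁)
    (r : Ω → ℝ) (B : Ω → ℝ) (hr : Measurable r) (hB : Measurable B)
    (hr_unif : μ.map r = volume.restrict (Set.Icc (0:ℝ) 1))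
    (hB_vals : ∀ ω, B ω = 0 ∨ B ω = 1)
    (hindep : IndepFun r B μ)
    (O : Ω → ℝ)
    (hO : ∀ ω, O ω =
      if r ω < ((1 - B ω) * P₀ + B ω * P₁) / (P₀ + P₁) then B ω else 1 - B ω) :
    μ {ω | O ω = 0} = ENNReal.ofReal (P₀ / (P₀ + P₁)) := by
  set t := P₀ / (P₀ + P₁)
  have ht_le : t ≤ 1 := (div_le_one (by positivity)).2 (by linarith)
  have ht_compl : P₁ / (P₀ + P₁) = 1 - t := by simp only [t]; field_simp; ring
  have hevent : {ω | O ω = 0} = r ⁻¹' Iio t ∩ B ⁻¹' {0} ∪ r ⁻¹' Ici (1 - t) ∩ B ⁻¹' {0}ᶜ := by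
    ext ω
    rcases hB_vals ω with h | h <;> simp [hO, h, ht_compl, t]
  have hIci : μ (r ⁻¹' Ici (1 - t)) = ENNReal.ofReal t := by
    rw [measure_preimage_Ici_of_uniform hr hr_unif (by linarith), sub_sub_cancel]
  rw [hevent, hindep.measure_union_preimage_inter_compl hB measurableSet_Iio measurableSet_Ici
    (measurableSet_singleton 0) (by rw [hIci, measure_preimage_Iio_of_uniform hr hr_unif ht_le]),
    measure_preimage_Iio_of_uniform hr hr_unif ht_le]
end

section
/- The function f(r) = log₂(2−r) − ∫₀¹ log₂(2−t) dt satisfies, for every x ∈ (0,1), ∫₀ˣ (f(r) − f(1−r)) dr = ∫₀ˣ log₂((2−r)/(1+r)) dr, and this quantity is strictly positive; hence f satisfies the sampling-function condition ∫₀ˣ (f(r) − f(1−r)) dr > 0 for all x ∈ (0,1). -/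
open MeasureTheory Real

private noncomputable def hFun : ℝ → ℝ := fun r => Real.logb 2 ((2 - r) / (1 + r))

private lemma hFun_contAt {x : ℝ} (hx : x ∈ Set.Ioo (-1 : ℝ) 2) : ContinuousAt hFun x := by
  obtain ⟨h1, h2⟩ := hx
  have hd : (0:ℝ) < 1 + x := by linarith
  have hn : (0:ℝ) < 2 - x := by linarith
  have harg : (0:ℝ) < (2 - x) / (1 + x) := div_pos hn hd
  have hc : ContinuousAt (fun r : ℝ => (2 - r) / (1 + r)) x :=
    ContinuousAt.div (by fun_prop) (by fun_prop) (ne_of_gt hd)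
  exact (Real.continuousAt_logb (ne_of_gt harg)).comp (x := x) hc

private lemma hFun_contOn {a b : ℝ} (ha : a ∈ Set.Ioo (-1 : ℝ) 2)
    (hb : b ∈ Set.Ioo (-1 : ℝ) 2) : ContinuousOn hFun (Set.uIcc a b) := by
  intro r hr
  have hsub : Set.uIcc a b ⊆ Set.Ioo (-1 : ℝ) 2 :=
    Set.OrdConnected.uIcc_subset Set.ordConnected_Ioo ha hb
  exact (hFun_contAt (hsub hr)).continuousWithinAt

private lemma hFun_intble {a b : ℝ} (ha : a ∈ Set.Ioo (-1 : ℝ) 2)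
    (hb : b ∈ Set.Ioo (-1 : ℝ) 2) : IntervalIntegrable hFun volume a b :=
  (hFun_contOn ha hb).intervalIntegrable

private lemma gDeriv {x : ℝ} (hx : x ∈ Set.Ioo (-1 : ℝ) 2) :
    HasDerivAt (fun u => ∫ r in (0:ℝ)..u, hFun r) (hFun x) x := by
  have h0 : (0:ℝ) ∈ Set.Ioo (-1 : ℝ) 2 := by constructor <;> norm_num
  exact intervalIntegral.integral_hasDerivAt_right (hFun_intble h0 hx)
    (ContinuousAt.stronglyMeasurableAtFilter isOpen_Ioo
      (fun y hy => hFun_contAt hy) x hx)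
    (hFun_contAt hx)

private lemma hFun_neg_symm (r : ℝ) : hFun (1 - r) = - hFun r := by
  have : (2 - (1 - r)) / (1 + (1 - r)) = ((2 - r) / (1 + r))⁻¹ := by
    rw [inv_div]; ring_nf
  rw [hFun, hFun, this, Real.logb_inv]

private lemma gOne : (∫ r in (0:ℝ)..1, hFun r) = 0 := by
  have h := intervalIntegral.integral_comp_sub_left (a := (0:ℝ)) (b := 1) hFun 1
  simp only [sub_zero, sub_self] at h
  have h2 : (∫ r in (0:ℝ)..1, hFun (1 - r)) = ∫ r in (0:ℝ)..1, -(hFun r) := by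
    apply intervalIntegral.integral_congr
    intro r _
    exact hFun_neg_symm r
  rw [h2, intervalIntegral.integral_neg] at h
  linarith

private lemma gCont : ContinuousOn (fun u => ∫ r in (0:ℝ)..u, hFun r) (Set.Icc (0:ℝ) 1) := by
  intro x hx
  have hx' : x ∈ Set.Ioo (-1 : ℝ) 2 := ⟨by linarith [hx.1], by linarith [hx.2]⟩
  exact (gDeriv hx').continuousAt.continuousWithinAt

private lemma gPos {x : ℝ} (hx : x ∈ Set.Ioo (0:ℝ) 1) :
    0 < ∫ r in (0:ℝ)..x, hFun r := by
  set g := fun u => ∫ r in (0:ℝ)..u, hFun r with hg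
  have g0 : g 0 = 0 := intervalIntegral.integral_same
  have g1 : g 1 = 0 := gOne
  rcases le_or_gt x (1/2) with hle | hgt
  · -- g strictly increasing on [0, 1/2]
    have mono : StrictMonoOn g (Set.Icc (0:ℝ) (1/2)) := by
      apply strictMonoOn_of_deriv_pos (convex_Icc _ _)
      · exact gCont.mono (Set.Icc_subset_Icc le_rfl (by norm_num))
      · intro y hy
        rw [interior_Icc] at hy
        have hy' : y ∈ Set.Ioo (-1:ℝ) 2 := ⟨by linarith [hy.1], by linarith [hy.2]⟩
        rw [(gDeriv hy').deriv]
        apply Real.logb_pos one_lt_two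
        rw [lt_div_iff₀ (by linarith [hy.1])]
        linarith [hy.2]
    have := mono (Set.left_mem_Icc.mpr (by norm_num)) ⟨le_of_lt hx.1, hle⟩ hx.1
    rwa [g0] at this
  · -- g strictly decreasing on [1/2, 1]
    have anti : StrictAntiOn g (Set.Icc (1/2 : ℝ) 1) := by
      apply strictAntiOn_of_deriv_neg (convex_Icc _ _)
      · exact gCont.mono (Set.Icc_subset_Icc (by norm_num) le_rfl)
      · intro y hy
        rw [interior_Icc] at hy
        have hy' : y ∈ Set.Ioo (-1:ℝ) 2 := ⟨by linarith [hy.1], by linarith [hy.2]⟩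
        rw [(gDeriv hy').deriv]
        apply Real.logb_neg one_lt_two
        · apply div_pos <;> linarith [hy.1, hy.2]
        · rw [div_lt_one (by linarith [hy.1])]
          linarith [hy.1]
    have := anti ⟨le_of_lt hgt, le_of_lt hx.2⟩ (Set.right_mem_Icc.mpr (by norm_num)) hx.2
    rwa [g1] at this

/-- The centered logarithm `f(r) = log₂(2-r) - ∫₀¹ log₂(2-t) dt` satisfies the
sampling-function condition: `∫₀ˣ (f r - f (1-r)) dr = ∫₀ˣ log₂((2-r)/(1+r)) dr > 0`
for all `x ∈ (0,1)`. -/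
theorem stmt_15 (f : ℝ → ℝ)
    (hf : ∀ r, f r = Real.logb 2 (2 - r) - ∫ t in (0:ℝ)..1, Real.logb 2 (2 - t)) :
    ∀ x ∈ Set.Ioo (0:ℝ) 1,
      (∫ r in (0:ℝ)..x, (f r - f (1 - r)))
        = (∫ r in (0:ℝ)..x, Real.logb 2 ((2 - r) / (1 + r)))
      ∧ 0 < (∫ r in (0:ℝ)..x, (f r - f (1 - r))) := by
  intro x hx
  have key : (∫ r in (0:ℝ)..x, (f r - f (1 - r)))
      = ∫ r in (0:ℝ)..x, Real.logb 2 ((2 - r) / (1 + r)) := by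
    apply intervalIntegral.integral_congr
    intro r hr
    rw [Set.uIcc_of_le (le_of_lt hx.1)] at hr
    have h1 : (0:ℝ) < 2 - r := by linarith [hr.2, hx.2]
    have h2 : (0:ℝ) < 1 + r := by linarith [hr.1]
    have : (2 - (1 - r)) = 1 + r := by ring
    simp only [hf, this]
    rw [Real.logb_div (ne_of_gt h1) (ne_of_gt h2)]
    ring
  refine ⟨key, ?_⟩
  rw [key]
  exact gPos hx
end

section
/- Let f : [0,1] → ℝ be continuous and satisfy the sampling-function condition ∫₀ˣ (f(r) − f(1−r)) dr > 0 for every x ∈ (0,1), let F(x) = ∫₀ˣ f(t) dt, and let pdf : [0,1] → ℝ be continuous, nonnegative, with ∫₀¹ pdf(p) dp = 1, symmetric (pdf(p) = pdf(1−p) for all p), and strictly positive at some point of (0,1). Then K := 2∫₀¹ F(p)·pdf(p) dp − F(0) − F(1) > 0. -/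
open MeasureTheory

/-- The constant `K = 2 ∫₀¹ F(p) pdf(p) dp - F 0 - F 1` governing capacity and robustness
is strictly positive whenever `f` satisfies the sampling-function condition and `pdf` is a
continuous symmetric density on `[0,1]` positive somewhere in `(0,1)`. -/
theorem stmt_17 (f : ℝ → ℝ) (hf_cont : ContinuousOn f (Set.Icc (0:ℝ) 1))
    (hcond : ∀ x ∈ Set.Ioo (0:ℝ) 1, 0 < ∫ r in (0:ℝ)..x, (f r - f (1 - r)))
    (F : ℝ → ℝ) (hF : ∀ x, F x = ∫ t in (0:ℝ)..x, f t)
    (pdf : ℝ → ℝ) (hpdf_cont : ContinuousOn pdf (Set.Icc (0:ℝ) 1))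
    (hpdf_nonneg : ∀ p ∈ Set.Icc (0:ℝ) 1, 0 ≤ pdf p)
    (hpdf_one : (∫ p in (0:ℝ)..1, pdf p) = 1)
    (hpdf_symm : ∀ p ∈ Set.Icc (0:ℝ) 1, pdf p = pdf (1 - p))
    (hpos : ∃ p ∈ Set.Ioo (0:ℝ) 1, 0 < pdf p) :
    0 < 2 * (∫ p in (0:ℝ)..1, F p * pdf p) - F 0 - F 1 := by
  have h01 : (0:ℝ) ≤ 1 := by norm_num
  have huIcc : Set.uIcc (0:ℝ) 1 = Set.Icc 0 1 := Set.uIcc_of_le h01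
  -- continuity of r ↦ f (1 - r) on [0,1]
  have hsub : ∀ x ∈ Set.Icc (0:ℝ) 1, (1 - x) ∈ Set.Icc (0:ℝ) 1 := by
    intro x hx; simp only [Set.mem_Icc] at hx ⊢; constructor <;> linarith [hx.1, hx.2]
  have hf1_cont : ContinuousOn (fun r => f (1 - r)) (Set.Icc (0:ℝ) 1) :=
    hf_cont.comp ((continuous_const.sub continuous_id).continuousOn) hsub
  have hg_cont : ContinuousOn (fun r => f r - f (1 - r)) (Set.Icc (0:ℝ) 1) :=
    hf_cont.sub hf1_cont
  -- generic interval integrability of continuous-on-[0,1] functions on subintervals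
  have hII : ∀ (g : ℝ → ℝ), ContinuousOn g (Set.Icc (0:ℝ) 1) →
      ∀ a b : ℝ, a ∈ Set.Icc (0:ℝ) 1 → b ∈ Set.Icc (0:ℝ) 1 →
      IntervalIntegrable g volume a b := by
    intro g hg a b ha hb
    exact (hg.mono (Set.uIcc_subset_Icc ha hb)).intervalIntegrable
  have h0m : (0:ℝ) ∈ Set.Icc (0:ℝ) 1 := by simp
  have h1m : (1:ℝ) ∈ Set.Icc (0:ℝ) 1 := by simp [h01]
  -- F is continuous on [0,1]
  have hFfun : F = fun x => ∫ t in (0:ℝ)..x, f t := funext hF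
  have hFcont : ContinuousOn F (Set.Icc (0:ℝ) 1) := by
    rw [hFfun, ← huIcc]
    exact intervalIntegral.continuousOn_primitive_interval
      (by rw [huIcc]; exact hf_cont.integrableOn_compact isCompact_Icc)
  have hF0 : F 0 = 0 := by rw [hF]; simp
  -- key identity: for p ∈ [0,1], ∫₀ᵖ (f r - f (1-r)) dr = F p + F (1-p) - F 1
  have hGeq : ∀ p ∈ Set.Icc (0:ℝ) 1,
      (∫ r in (0:ℝ)..p, (f r - f (1 - r))) = F p + F (1 - p) - F 1 := by
    intro p hp
    have hpm := hsub p hp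
    have h1 : (∫ r in (0:ℝ)..p, f (1 - r)) = ∫ x in (1-p)..(1:ℝ), f x := by
      have := intervalIntegral.integral_comp_sub_left (a := (0:ℝ)) (b := p) f 1
      simpa using this
    have h2 : (∫ x in (0:ℝ)..(1-p), f x) + (∫ x in (1-p)..(1:ℝ), f x) = ∫ x in (0:ℝ)..1, f x :=
      intervalIntegral.integral_add_adjacent_intervals
        (hII f hf_cont 0 (1-p) h0m hpm) (hII f hf_cont (1-p) 1 hpm h1m)
    rw [intervalIntegral.integral_sub (hII f hf_cont 0 p h0m hp)
        (hII (fun r => f (1-r)) hf1_cont 0 p h0m hp), h1, hF p, hF (1-p), hF 1]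
    linarith [h2]
  -- symmetry step: ∫ F(1-p) pdf(p) = ∫ F(p) pdf(p)
  have hFp_cont : ContinuousOn (fun p => F p * pdf p) (Set.Icc (0:ℝ) 1) :=
    hFcont.mul hpdf_cont
  have hsymm : (∫ p in (0:ℝ)..1, F (1 - p) * pdf p) = ∫ p in (0:ℝ)..1, F p * pdf p := by
    have hcongr : (∫ p in (0:ℝ)..1, F (1 - p) * pdf p)
        = ∫ p in (0:ℝ)..1, F (1 - p) * pdf (1 - p) := by
      apply intervalIntegral.integral_congr
      intro x hx
      rw [huIcc] at hx
      dsimp only; rw [hpdf_symm x hx]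
    rw [hcongr]
    have := intervalIntegral.integral_comp_sub_left (a := (0:ℝ)) (b := 1)
      (fun x => F x * pdf x) 1
    simpa using this
  -- combine: 2 ∫ F pdf - F 1 = ∫ (F p + F(1-p) - F 1) * pdf p
  have hF1p_cont : ContinuousOn (fun p => F (1 - p) * pdf p) (Set.Icc (0:ℝ) 1) :=
    (hFcont.comp ((continuous_const.sub continuous_id).continuousOn) hsub).mul hpdf_cont
  have hsum : (∫ p in (0:ℝ)..1, (F p + F (1 - p) - F 1) * pdf p)
      = 2 * (∫ p in (0:ℝ)..1, F p * pdf p) - F 1 := by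
    have e1 : ∀ p, (F p + F (1 - p) - F 1) * pdf p
        = F p * pdf p + F (1 - p) * pdf p - F 1 * pdf p := by intro p; ring
    simp only [e1]
    rw [intervalIntegral.integral_sub
        ((hII _ hFp_cont 0 1 h0m h1m).add (hII _ hF1p_cont 0 1 h0m h1m))
        (by simpa using (hII pdf hpdf_cont 0 1 h0m h1m).const_mul (F 1)),
      intervalIntegral.integral_add (hII _ hFp_cont 0 1 h0m h1m) (hII _ hF1p_cont 0 1 h0m h1m),
      intervalIntegral.integral_const_mul, hpdf_one, hsymm]
    ring
  -- rewrite goal as positivity of ∫ g where g p = G p * pdf p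
  have hgoal : 2 * (∫ p in (0:ℝ)..1, F p * pdf p) - F 0 - F 1
      = ∫ p in (0:ℝ)..1, (∫ r in (0:ℝ)..p, (f r - f (1 - r))) * pdf p := by
    rw [hF0, sub_zero, ← hsum]
    apply intervalIntegral.integral_congr
    intro x hx
    rw [huIcc] at hx
    dsimp only; rw [hGeq x hx]
  rw [hgoal]
  -- now prove positivity
  set g : ℝ → ℝ := fun p => (∫ r in (0:ℝ)..p, (f r - f (1 - r))) * pdf p with hgdef
  have hGcont : ContinuousOn (fun p => ∫ r in (0:ℝ)..p, (f r - f (1 - r)))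
      (Set.Icc (0:ℝ) 1) := by
    rw [← huIcc]
    exact intervalIntegral.continuousOn_primitive_interval
      (by rw [huIcc]; exact hg_cont.integrableOn_compact isCompact_Icc)
  have hgcont : ContinuousOn g (Set.Icc (0:ℝ) 1) := hGcont.mul hpdf_cont
  -- g ≥ 0 on [0,1]
  have hGnonneg : ∀ p ∈ Set.Icc (0:ℝ) 1, 0 ≤ ∫ r in (0:ℝ)..p, (f r - f (1 - r)) := by
    intro p hp
    rcases eq_or_lt_of_le hp.1 with h | h
    · simp [← h]
    rcases eq_or_lt_of_le hp.2 with h' | h'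
    · -- p = 1 : integral = F 1 + F 0 - F 1 = 0
      rw [h', hGeq 1 h1m]; norm_num [hF0]
    · exact le_of_lt (hcond p ⟨h, h'⟩)
  have hgnonneg : ∀ p ∈ Set.Icc (0:ℝ) 1, 0 ≤ g p := fun p hp =>
    mul_nonneg (hGnonneg p hp) (hpdf_nonneg p hp)
  -- positivity at p0 and a neighborhood
  obtain ⟨p0, hp0, hp0pos⟩ := hpos
  have hp0Icc : p0 ∈ Set.Icc (0:ℝ) 1 := Set.mem_Icc_of_Ioo hp0
  have hgp0 : 0 < g p0 := mul_pos (hcond p0 hp0) hp0pos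
  have hca : ContinuousAt g p0 :=
    hgcont.continuousAt (Icc_mem_nhds hp0.1 hp0.2)
  have hev : ∀ᶠ x in nhds p0, 0 < g x :=
    ContinuousAt.eventually_lt continuousAt_const hca hgp0
  rw [Metric.eventually_nhds_iff] at hev
  obtain ⟨δ, hδ, hball⟩ := hev
  set δ' : ℝ := min (δ/2) (min (p0/2) ((1-p0)/2)) with hδ'def
  have hδ'pos : 0 < δ' := by
    apply lt_min (by linarith) (lt_min (by linarith [hp0.1]) (by linarith [hp0.2]))
  have hδ'lt : δ' < δ := lt_of_le_of_lt (min_le_left _ _) (by linarith)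
  set a : ℝ := p0 - δ' with hadef
  set b : ℝ := p0 + δ' with hbdef
  have ha0 : 0 < a := by
    have : δ' ≤ p0/2 := le_trans (min_le_right _ _) (min_le_left _ _)
    simp only [hadef]; linarith [hp0.1]
  have hb1 : b < 1 := by
    have : δ' ≤ (1-p0)/2 := le_trans (min_le_right _ _) (min_le_right _ _)
    simp only [hbdef]; linarith [hp0.2]
  have hab : a < b := by simp only [hadef, hbdef]; linarith
  have haIcc : a ∈ Set.Icc (0:ℝ) 1 := ⟨le_of_lt ha0, by linarith⟩
  have hbIcc : b ∈ Set.Icc (0:ℝ) 1 := ⟨by linarith, le_of_lt hb1⟩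
  have hpos_ab : ∀ x ∈ Set.Ioo a b, 0 < g x := by
    intro x hx
    apply hball
    rw [Real.dist_eq, abs_lt]
    constructor
    · have := hx.1; simp only [hadef] at this; linarith
    · have := hx.2; simp only [hbdef] at this; linarith
  have hmid : 0 < ∫ p in a..b, g p :=
    intervalIntegral.intervalIntegral_pos_of_pos_on (hII g hgcont a b haIcc hbIcc) hpos_ab hab
  have hleft : 0 ≤ ∫ p in (0:ℝ)..a, g p :=
    intervalIntegral.integral_nonneg haIcc.1
      (fun u hu => hgnonneg u ⟨hu.1, le_trans hu.2 haIcc.2⟩)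
  have hright : 0 ≤ ∫ p in b..(1:ℝ), g p :=
    intervalIntegral.integral_nonneg hbIcc.2
      (fun u hu => hgnonneg u ⟨le_trans hbIcc.1 hu.1, hu.2⟩)
  have hsplit1 : (∫ p in (0:ℝ)..a, g p) + (∫ p in a..(1:ℝ), g p) = ∫ p in (0:ℝ)..1, g p :=
    intervalIntegral.integral_add_adjacent_intervals
      (hII g hgcont 0 a h0m haIcc) (hII g hgcont a 1 haIcc h1m)
  have hsplit2 : (∫ p in a..b, g p) + (∫ p in b..(1:ℝ), g p) = ∫ p in a..(1:ℝ), g p :=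
    intervalIntegral.integral_add_adjacent_intervals
      (hII g hgcont a b haIcc hbIcc) (hII g hgcont b 1 hbIcc h1m)
  have : (0:ℝ) < ∫ p in (0:ℝ)..1, g p := by
    rw [← hsplit1, ← hsplit2]; linarith
  exact this
end
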